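/- Let λ₁ ≈ 0.9012 be the unique positive root of e^{-λ} = λ²/2 and, for B ≥ 2, let λ_B be a root of p_B(λ) = e^{-λ} − λ²/2 − e^{-f_{B-1}(λ)} where f₁(λ) = λ + e^{-λ} − λ²/2 and f_{j+1}(λ) = f₁(λ) − e^{-f_j(λ)}. If λ_{B} and λ_{B+1} both exist in (0, λ₁), then λ_{B+1} ≤ λ_B; that is, the optimal long term average age in the RBR model is nonincreasing in the battery size B. -/

import Mathlib

/-- `f₁(λ) = λ + e^{-λ} − λ²/2`. -/
noncomputable def f1 (l : ℝ) : ℝ := l + Real.exp (-l) - l ^ 2 / 2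

/-- `fseq n l` is `f_{n+1}(λ)` of the paper: `f_{j+1}(λ) = f₁(λ) − e^{-f_j(λ)}`. -/
noncomputable def fseq : ℕ → ℝ → ℝ
  | 0 => f1
  | n + 1 => fun l => f1 l - Real.exp (-(fseq n l))

/-!
`p_B(λ) = e^{-λ} − λ²/2 − e^{-f_{B-1}(λ)}` is strictly decreasing on `λ ≥ 0`, because
`f₁' = 1 − e^{-λ} − λ ≤ 0` makes every `f_j` nonincreasing. Since `f_{j+1} = f₁ − e^{-f_j} < f_j`,
we get `p_{B+1} < p_B` pointwise, so `p_B(λ_{B+1}) > p_{B+1}(λ_{B+1}) = 0 = p_B(λ_B)`, which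
forces `λ_{B+1} ≤ λ_B`.
-/

open Real

lemma hasDerivAt_f1 (l : ℝ) : HasDerivAt f1 (1 - exp (-l) - l) l :=
  (((hasDerivAt_id' l).add (hasDerivAt_neg l).exp).sub
    ((hasDerivAt_pow 2 l).div_const 2)).congr_deriv (by norm_num; ring)

lemma f1_antitone : Antitone f1 :=
  antitone_of_hasDerivAt_nonpos hasDerivAt_f1 fun x =>
    (by linarith [add_one_le_exp (-x)] : 1 - exp (-x) - x ≤ 0)

lemma fseq_antitone (n : ℕ) : Antitone (fseq n) := by
  induction n with
  | zero => exact f1_antitone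
  | succ n ih =>
    intro a b hab
    have := exp_le_exp.mpr (neg_le_neg (ih hab))
    simp only [fseq]
    linarith [f1_antitone hab]

lemma fseq_succ_lt (n : ℕ) (l : ℝ) : fseq (n + 1) l < fseq n l := by
  induction n with
  | zero => simpa [fseq] using exp_pos (-(f1 l))
  | succ n ih =>
    have := exp_lt_exp.mpr (neg_lt_neg ih)
    simp only [fseq] at this ⊢
    linarith

/-- `pseq n` is `p_{n+2}` of the paper. -/
noncomputable def pseq (n : ℕ) (l : ℝ) : ℝ := exp (-l) - l ^ 2 / 2 - exp (-(fseq n l))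

lemma pseq_strictAntiOn (n : ℕ) : StrictAntiOn (pseq n) (Set.Ici 0) := by
  intro a ha b _ hab
  have hexp : exp (-b) < exp (-a) := exp_lt_exp.mpr (neg_lt_neg hab)
  have hsq : a ^ 2 < b ^ 2 := pow_lt_pow_left₀ hab ha two_ne_zero
  have hf : exp (-(fseq n a)) ≤ exp (-(fseq n b)) :=
    exp_le_exp.mpr (neg_le_neg (fseq_antitone n hab.le))
  simp only [pseq]
  linarith

lemma pseq_succ_lt (n : ℕ) (l : ℝ) : pseq (n + 1) l < pseq n l := by
  have := exp_lt_exp.mpr (neg_lt_neg (fseq_succ_lt n l))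
  simp only [pseq]
  linarith

theorem optimal_age_nonincreasing_in_B_general (B : ℕ) (hB : 2 ≤ B)
    (l₁ lB lB1 : ℝ)
    (hlB : lB ∈ Set.Ioo 0 l₁)
    (hrootB : Real.exp (-lB) - lB ^ 2 / 2 - Real.exp (-(fseq (B - 2) lB)) = 0)
    (hrootB1 :
      Real.exp (-lB1) - lB1 ^ 2 / 2 - Real.exp (-(fseq (B - 1) lB1)) = 0) :
    lB1 ≤ lB := by
  obtain ⟨n, rfl⟩ : ∃ n, B = n + 2 := ⟨B - 2, by omega⟩
  have hpB : pseq n lB = 0 := hrootB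
  have hpB1 : pseq (n + 1) lB1 = 0 := hrootB1
  by_contra! hlt
  have hanti := pseq_strictAntiOn n hlB.1.le (hlB.1.trans hlt).le hlt
  linarith [pseq_succ_lt n lB1]

/-- Let `λ₁` be the unique positive root of `e^{-λ} = λ²/2`, and for `B ≥ 2` let
`λ_B ∈ (0, λ₁)` be a root of `p_B(λ) = e^{-λ} − λ²/2 − e^{-f_{B-1}(λ)}`. If `λ_B`
and `λ_{B+1}` both exist in `(0, λ₁)`, then `λ_{B+1} ≤ λ_B`: the optimal long term
average age in the RBR model is nonincreasing in the battery size `B`. -/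
theorem optimal_age_nonincreasing_in_B (B : ℕ) (hB : 2 ≤ B)
    (l₁ lB lB1 : ℝ) (hl₁pos : 0 < l₁) (hl₁ : Real.exp (-l₁) = l₁ ^ 2 / 2)
    (hlB : lB ∈ Set.Ioo 0 l₁) (hlB1 : lB1 ∈ Set.Ioo 0 l₁)
    (hrootB : Real.exp (-lB) - lB ^ 2 / 2 - Real.exp (-(fseq (B - 2) lB)) = 0)
    (hrootB1 :
      Real.exp (-lB1) - lB1 ^ 2 / 2 - Real.exp (-(fseq (B - 1) lB1)) = 0) :
    lB1 ≤ lB :=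
  optimal_age_nonincreasing_in_B_general B hB l₁ lB lB1 hlB hrootB hrootB1
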